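/- Let v ∈ ℤ³ be a nonzero integer vector with b_3(v,v) = 0. Then there exist g ∈ G_3, an index i ∈ {1,2,3} and a nonzero rational number λ such that g·v = λ·c_i, where c_1 = (0,1,1), c_2 = (1,0,1), c_3 = (1,1,0). (Every rational isotropic point can be mapped to one of the three vertices of the fundamental domain by the action of UC(3).) -/

import Mathlib

open Matrix

/-- The matrix `M_{N,j}`: identity except in the `j`-th column, whose `j`-th entry
is `-1` and whose other entries are all `2`. -/
noncomputable def Mmat (N : ℕ) (j : Fin N) : Matrix (Fin N) (Fin N) ℝ :=
  Matrix.of fun i k => if k = j then (if i = j then -1 else 2) else (if i = k then 1 else 0)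

/-- The matrix `B_N`: diagonal entries `-1`, off-diagonal entries `1`. -/
noncomputable def Bmat (N : ℕ) : Matrix (Fin N) (Fin N) ℝ :=
  Matrix.of fun i k => if i = k then -1 else 1

/-- The symmetric bilinear form `b_N(v,w) = vᵗ B_N w` on `ℝ^N`. -/
noncomputable def bform (N : ℕ) (v w : Fin N → ℝ) : ℝ := v ⬝ᵥ (Bmat N).mulVec w

/-- The subgroup of `GL_N(ℝ)` generated by the transposed matrices `M_{N,j}ᵗ`. -/
noncomputable def Ggrp (N : ℕ) : Subgroup (GL (Fin N) ℝ) :=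
  Subgroup.closure {g | ∃ j : Fin N, (g : Matrix (Fin N) (Fin N) ℝ) = (Mmat N j)ᵀ}

/-- The fundamental cone `D_N = {w : b_N(w, α_i) ≥ 0 for all i}`. -/
def Dcone (N : ℕ) : Set (Fin N → ℝ) := {w | ∀ i : Fin N, 0 ≤ bform N w (Pi.single i 1)}

/-- The Tits cone `T_N = ⋃_{g ∈ G_N} g (D_N)`. -/
def Tcone (N : ℕ) : Set (Fin N → ℝ) :=
  {v | ∃ g ∈ Ggrp N, ∃ w ∈ Dcone N, v = (g : Matrix (Fin N) (Fin N) ℝ).mulVec w}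

/-- The vector `c_j = u_N - (N-2) α_j`: coordinates `1` except the `j`-th which is `-(N-3)`. -/
noncomputable def cvec (N : ℕ) (j : Fin N) : Fin N → ℝ :=
  fun i => if i = j then -((N : ℝ) - 3) else 1

/-- The integral matrix `M_{N,j}`. -/
def MmatZ (N : ℕ) (j : Fin N) : Matrix (Fin N) (Fin N) ℤ :=
  Matrix.of fun i k => if k = j then (if i = j then -1 else 2) else (if i = k then 1 else 0)

/-- The integral matrix `B_N`. -/
def BmatZ (N : ℕ) : Matrix (Fin N) (Fin N) ℤ :=
  Matrix.of fun i k => if i = k then -1 else 1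

/-- The bilinear form `b_N` on `ℤ^N`. -/
def bformZ (N : ℕ) (v w : Fin N → ℤ) : ℤ := v ⬝ᵥ (BmatZ N).mulVec w

/-!
Each generator `M_{3,j}ᵀ` acts on `ℤ³` as the reflection `s_j` replacing `v_j` by
`2 ∑ v - 3 v_j`, and `s_j` preserves `b_3`. An isotropic vector has all coordinates of one sign,
so up to sign they are nonnegative. If one of them vanishes, isotropy forces the other two to be
equal and `v` is already a multiple of a vertex `c_j`. Otherwise, reflecting in the largest
coordinate `v_j = c` with the other two `a, b` replaces it by the other root `2 (a + b) - c`
of the quadratic that `b_3(v, v) = 0` imposes on `v_j`; this root lies in `[0, c)`, so the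
coordinate sum strictly decreases and the descent terminates.
-/

section Reflection

variable {N : ℕ}

def reflect {R : Type*} [CommRing R] (j : Fin N) (v : Fin N → R) : Fin N → R :=
  Function.update v j (2 * ∑ k, v k - 3 * v j)

theorem sum_reflect {R : Type*} [CommRing R] (j : Fin N) (v : Fin N → R) :
    ∑ k, reflect j v k = 3 * ∑ k, v k - 4 * v j := by
  rw [reflect, Finset.sum_update_of_mem (Finset.mem_univ j)]
  linear_combination -Finset.sum_eq_add_sum_sdiff_singleton_of_mem (Finset.mem_univ j) v

theorem sum_sq_reflect {R : Type*} [CommRing R] (j : Fin N) (v : Fin N → R) :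
    ∑ k, reflect j v k ^ 2 = ∑ k, v k ^ 2 - v j ^ 2 + (2 * ∑ k, v k - 3 * v j) ^ 2 := by
  have h : (fun k => reflect j v k ^ 2) =
      Function.update (fun k => v k ^ 2) j ((2 * ∑ k, v k - 3 * v j) ^ 2) := by
    funext k
    rcases eq_or_ne k j with rfl | hk <;> simp [reflect, *]
  rw [h, Finset.sum_update_of_mem (Finset.mem_univ j)]
  linear_combination
    -Finset.sum_eq_add_sum_sdiff_singleton_of_mem (Finset.mem_univ j) (fun k => v k ^ 2)

theorem reflect_reflect {R : Type*} [CommRing R] (j : Fin N) (v : Fin N → R) :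
    reflect j (reflect j v) = v := by
  rw [reflect, sum_reflect]
  simp only [reflect, Function.update_self, Function.update_idem]
  convert Function.update_eq_self j v using 2
  ring

theorem intCast_reflect (j : Fin N) (v : Fin N → ℤ) :
    (fun k => ((reflect j v k : ℤ) : ℝ)) = reflect j (fun k => (v k : ℝ)) := by
  funext k
  rcases eq_or_ne k j with rfl | hk <;> simp [reflect, *]

theorem Mmat_transpose_mulVec (j : Fin N) (v : Fin N → ℝ) :
    (Mmat N j)ᵀ *ᵥ v = reflect j v := by
  funext i
  rcases eq_or_ne i j with rfl | hij
  · have h (k : Fin N) : (if k = i then (-1 : ℝ) else 2) * v k =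
        2 * v k - 3 * if k = i then v k else 0 := by split_ifs <;> ring
    simp [mulVec, dotProduct, Mmat, reflect, h, Finset.sum_sub_distrib, ← Finset.mul_sum]
  · simp [mulVec, dotProduct, Mmat, reflect, hij]

theorem Mmat_transpose_mul_self (j : Fin N) : (Mmat N j)ᵀ * (Mmat N j)ᵀ = 1 := by
  rw [ext_iff_mulVec]
  intro v
  rw [← mulVec_mulVec, Mmat_transpose_mulVec, Mmat_transpose_mulVec, reflect_reflect, one_mulVec]

theorem exists_mem_Ggrp_eq_Mmat_transpose (j : Fin N) :
    ∃ g ∈ Ggrp N, (g : Matrix (Fin N) (Fin N) ℝ) = (Mmat N j)ᵀ :=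
  let g : GL (Fin N) ℝ :=
    ⟨(Mmat N j)ᵀ, (Mmat N j)ᵀ, Mmat_transpose_mul_self j, Mmat_transpose_mul_self j⟩
  ⟨g, Subgroup.subset_closure ⟨j, rfl⟩, rfl⟩

end Reflection

section Form

variable {N : ℕ}

theorem BmatZ_mulVec (v : Fin N → ℤ) (k : Fin N) :
    (BmatZ N *ᵥ v) k = ∑ l, v l - 2 * v k := by
  have h (l : Fin N) : (if k = l then -1 else 1) * v l = v l - 2 * if k = l then v l else 0 := by
    split_ifs <;> ring
  simp [BmatZ, mulVec, dotProduct, h, Finset.sum_sub_distrib]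

theorem bformZ_self (v : Fin N → ℤ) :
    bformZ N v v = (∑ k, v k) ^ 2 - 2 * ∑ k, v k ^ 2 := by
  simp_rw [bformZ, dotProduct, BmatZ_mulVec, mul_sub, Finset.sum_sub_distrib, ← Finset.sum_mul,
    mul_left_comm _ (2 : ℤ), ← Finset.mul_sum, sq]

theorem bformZ_reflect (j : Fin N) (v : Fin N → ℤ) :
    bformZ N (reflect j v) (reflect j v) = bformZ N v v := by
  rw [bformZ_self, bformZ_self, sum_reflect, sum_sq_reflect]
  ring

theorem eq_zero_of_bformZ_eq_zero_of_sum_eq_zero {v : Fin N → ℤ} (hiso : bformZ N v v = 0)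
    (hsum : ∑ k, v k = 0) : v = 0 := by
  rw [bformZ_self, hsum] at hiso
  have hsq : ∑ k, v k ^ 2 = 0 := by linarith
  funext k
  exact pow_eq_zero_iff two_ne_zero |>.1 <|
    (Finset.sum_eq_zero_iff_of_nonneg fun k _ => sq_nonneg (v k)).1 hsq k (Finset.mem_univ k)

end Form

def InVertexOrbit (N : ℕ) (v : Fin N → ℤ) : Prop :=
  ∃ g ∈ Ggrp N, ∃ i : Fin N, ∃ lam : ℚ, lam ≠ 0 ∧
    (g : Matrix (Fin N) (Fin N) ℝ) *ᵥ (fun k => (v k : ℝ)) = (lam : ℝ) • cvec N i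

namespace InVertexOrbit

variable {N : ℕ} {v : Fin N → ℤ}

theorem of_reflect (j : Fin N) (h : InVertexOrbit N (reflect j v)) : InVertexOrbit N v := by
  obtain ⟨g, hg, i, lam, hlam, hgv⟩ := h
  obtain ⟨s, hs, hsM⟩ := exists_mem_Ggrp_eq_Mmat_transpose j
  refine ⟨g * s, mul_mem hg hs, i, lam, hlam, ?_⟩
  rw [Units.val_mul, ← mulVec_mulVec, hsM, Mmat_transpose_mulVec, ← intCast_reflect, hgv]

theorem neg (h : InVertexOrbit N v) : InVertexOrbit N (-v) := by
  obtain ⟨g, hg, i, lam, hlam, hgv⟩ := h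
  refine ⟨g, hg, i, -lam, neg_ne_zero.2 hlam, ?_⟩
  have hcast : (fun k => (((-v) k : ℤ) : ℝ)) = -fun k => (v k : ℝ) := by
    funext k; simp
  rw [hcast, mulVec_neg, hgv, Rat.cast_neg, neg_smul]

end InVertexOrbit

theorem cvec_three : cvec 3 = ![![0, 1, 1], ![1, 0, 1], ![1, 1, 0]] := by
  funext i k
  fin_cases i <;> fin_cases k <;> norm_num [cvec]

theorem nonneg_or_nonpos_of_bformZ_eq_zero {v : Fin 3 → ℤ} (hiso : bformZ 3 v v = 0) :
    (∀ i, 0 ≤ v i) ∨ ∀ i, v i ≤ 0 := by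
  rw [bformZ_self, Fin.sum_univ_three, Fin.sum_univ_three] at hiso
  -- isotropy says `4 v i v k = (v i + v k - v l) ^ 2` for `{i, k, l} = {0, 1, 2}`
  have hprod (i k : Fin 3) : 0 ≤ v i * v k := by
    fin_cases i <;> fin_cases k <;> simp only [Fin.zero_eta, Fin.mk_one, Fin.reduceFinMk] <;>
      nlinarith [sq_nonneg (v 0 + v 1 - v 2), sq_nonneg (v 0 - v 1 + v 2),
        sq_nonneg (v 1 + v 2 - v 0)]
  by_contra! h
  obtain ⟨⟨i, hi⟩, ⟨k, hk⟩⟩ := h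
  exact (mul_neg_of_neg_of_pos hi hk).not_ge (hprod i k)

theorem two_mul_eq_sum_of_bformZ_eq_zero {v : Fin 3 → ℤ} (hiso : bformZ 3 v v = 0) {j : Fin 3}
    (hj : v j = 0) {k : Fin 3} (hk : k ≠ j) : 2 * v k = ∑ l, v l := by
  rw [bformZ_self, Fin.sum_univ_three, Fin.sum_univ_three] at hiso
  -- once `v j = 0`, the square below is `-b_3(v, v)`
  have hsq : (2 * v k - ∑ l, v l) ^ 2 = 0 := by
    rw [Fin.sum_univ_three]
    fin_cases j <;> fin_cases k <;>
      simp only [Fin.zero_eta, Fin.mk_one, Fin.reduceFinMk] at hj hk ⊢ <;>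
        first | exact absurd rfl hk | (rw [hj] at hiso ⊢; linear_combination -hiso)
  exact sub_eq_zero.1 (pow_eq_zero_iff two_ne_zero |>.1 hsq)

theorem inVertexOrbit_of_coord_eq_zero {v : Fin 3 → ℤ} (hv : v ≠ 0) (hiso : bformZ 3 v v = 0)
    {j : Fin 3} (hj : v j = 0) : InVertexOrbit 3 v := by
  have hsum : ∑ l, v l ≠ 0 := fun h => hv (eq_zero_of_bformZ_eq_zero_of_sum_eq_zero hiso h)
  refine ⟨1, one_mem _, j, ((∑ l, v l : ℤ) : ℚ) / 2,
    div_ne_zero (Int.cast_ne_zero.2 hsum) two_ne_zero, ?_⟩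
  rw [Units.val_one, one_mulVec]
  funext k
  rcases eq_or_ne k j with rfl | hk
  · simp [cvec, hj]
  · simp only [cvec, hk, if_false, mul_one, Rat.cast_div, Rat.cast_intCast, Rat.cast_ofNat,
      Pi.smul_apply, smul_eq_mul]
    rw [eq_div_iff two_ne_zero, mul_comm]
    exact_mod_cast two_mul_eq_sum_of_bformZ_eq_zero hiso hj hk

theorem other_root_bounds {a b c : ℤ} (ha : 0 < a) (hb : 0 < b) (hac : a ≤ c) (hbc : b ≤ c)
    (hiso : (a + b + c) ^ 2 = 2 * (a ^ 2 + b ^ 2 + c ^ 2)) :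
    0 ≤ 2 * (a + b) - c ∧ 2 * (a + b) - c < c := by
  -- `c` and `2 (a + b) - c` are the two roots of `X ^ 2 - 2 (a + b) X + (a - b) ^ 2`
  have hvieta : c * (2 * (a + b) - c) = (a - b) ^ 2 := by linear_combination hiso
  have hc : 0 < c := ha.trans_le hac
  refine ⟨nonneg_of_mul_nonneg_right (hvieta ▸ sq_nonneg _) hc, ?_⟩
  have : (a - b) ^ 2 < c ^ 2 := sq_lt_sq' (by linarith) (by linarith)
  exact lt_of_mul_lt_mul_left (by nlinarith) hc.le

theorem reflect_max_coord_bounds {v : Fin 3 → ℤ} (hpos : ∀ i, 0 < v i)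
    (hiso : bformZ 3 v v = 0) {j : Fin 3} (hmax : ∀ i, v i ≤ v j) :
    0 ≤ 2 * ∑ k, v k - 3 * v j ∧ 2 * ∑ k, v k - 3 * v j < v j := by
  rw [bformZ_self, Fin.sum_univ_three, Fin.sum_univ_three] at hiso
  rw [Fin.sum_univ_three]
  obtain rfl | rfl | rfl : j = 0 ∨ j = 1 ∨ j = 2 := by fin_cases j <;> simp
  · have := other_root_bounds (hpos 1) (hpos 2) (hmax 1) (hmax 2) (by linear_combination hiso)
    constructor <;> linarith
  · have := other_root_bounds (hpos 0) (hpos 2) (hmax 0) (hmax 2) (by linear_combination hiso)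
    constructor <;> linarith
  · have := other_root_bounds (hpos 0) (hpos 1) (hmax 0) (hmax 1) (by linear_combination hiso)
    constructor <;> linarith

theorem inVertexOrbit_of_nonneg {v : Fin 3 → ℤ} (hnonneg : ∀ i, 0 ≤ v i) (hv : v ≠ 0)
    (hiso : bformZ 3 v v = 0) : InVertexOrbit 3 v := by
  by_cases hzero : ∃ j, v j = 0
  · obtain ⟨j, hj⟩ := hzero
    exact inVertexOrbit_of_coord_eq_zero hv hiso hj
  push Not at hzero
  have hpos (i : Fin 3) : 0 < v i := (hnonneg i).lt_of_ne' (hzero i)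
  obtain ⟨j, -, hmax⟩ := Finset.exists_max_image Finset.univ v Finset.univ_nonempty
  obtain ⟨hlow, hhigh⟩ :=
    reflect_max_coord_bounds hpos hiso fun i => hmax i (Finset.mem_univ i)
  have hnonneg' (i : Fin 3) : 0 ≤ reflect j v i := by
    rcases eq_or_ne i j with rfl | hi
    · simpa [reflect] using hlow
    · simpa [reflect, hi] using hnonneg i
  have hne : reflect j v ≠ 0 := fun h => hv (by rw [← reflect_reflect j v, h]; simp [reflect])
  have hdesc : ∑ k, reflect j v k < ∑ k, v k := by rw [sum_reflect]; linarith
  have hsum_nonneg : 0 ≤ ∑ k, reflect j v k := Finset.sum_nonneg fun i _ => hnonneg' i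
  exact (inVertexOrbit_of_nonneg hnonneg' hne ((bformZ_reflect j v).trans hiso)).of_reflect j
termination_by (∑ k, v k).toNat
decreasing_by omega

/-- Every nonzero integral `b_3`-isotropic vector can be mapped by an element of `G_3`
to a nonzero rational multiple of one of `c_1 = (0,1,1)`, `c_2 = (1,0,1)`,
`c_3 = (1,1,0)`. -/
theorem stmt13 (v : Fin 3 → ℤ) (hv : v ≠ 0) (hiso : bformZ 3 v v = 0) :
    ∃ g ∈ Ggrp 3, ∃ i : Fin 3, ∃ lam : ℚ, lam ≠ 0 ∧
      (g : Matrix (Fin 3) (Fin 3) ℝ).mulVec (fun k => (v k : ℝ)) =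
        (lam : ℝ) • (![![0, 1, 1], ![1, 0, 1], ![1, 1, 0]] : Fin 3 → Fin 3 → ℝ) i := by
  rw [← cvec_three]
  rcases nonneg_or_nonpos_of_bformZ_eq_zero hiso with hnonneg | hnonpos
  · exact inVertexOrbit_of_nonneg hnonneg hv hiso
  · have hiso' : bformZ 3 (-v) (-v) = 0 := by
      rwa [bformZ, mulVec_neg, neg_dotProduct, dotProduct_neg, neg_neg]
    have := (inVertexOrbit_of_nonneg (v := -v) (fun i => neg_nonneg.2 (hnonpos i))
      (neg_ne_zero.2 hv) hiso').neg
    rwa [neg_neg] at this
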